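/- A word w over {H, U, D} with n of each letter is an S-Motzkin path if and only if: (a) the subword of w obtained by deleting all D's equals (HU)^n, and (b) every prefix of w has at least as many U's as D's. -/
import Mathlib


/-- The three step types of a Motzkin path: H = (1,0), U = (1,1), D = (1,-1). -/
inductive Step : Type | H | U | D
deriving DecidableEq, Repr

/-- Between every two consecutive H steps there is exactly one U step. -/
def OneUBetweenH (w : List Step) : Prop :=
  ∀ p mid s : List Step, w = p ++ Step.H :: mid ++ Step.H :: s →
    Step.H ∉ mid → mid.count Step.U = 1

/-- The k-th D step occurs after at least k H steps and at least k U steps. -/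
def DCond (w : List Step) : Prop :=
  ∀ p s : List Step, w = p ++ Step.D :: s →
    p.count Step.D + 1 ≤ p.count Step.H ∧ p.count Step.D + 1 ≤ p.count Step.U

/-- A Motzkin path: every prefix has #U ≥ #D, and the total height is 0. -/
def IsMotzkin (w : List Step) : Prop :=
  w.count Step.U = w.count Step.D ∧
  ∀ p : List Step, p <+: w → p.count Step.D ≤ p.count Step.U

/-- An S-Motzkin path of length 3n (original definition): a Motzkin path with n steps
of each type, starting with H, with exactly one U between consecutive H steps,
and where the k-th D occurs after at least k H steps and k U steps. -/
def IsSMotzkin (n : ℕ) (w : List Step) : Prop :=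
  IsMotzkin w ∧ w.count Step.H = n ∧ w.count Step.U = n ∧ w.count Step.D = n ∧
  (w ≠ [] → w.head? = some Step.H) ∧ OneUBetweenH w ∧ DCond w

/-! ### Auxiliary lemmas -/

lemma filter_split {f : Step → Bool} {x : Step} (hx : f x = true) :
    ∀ {w a b : List Step}, w.filter f = a ++ x :: b →
      ∃ p s, w = p ++ x :: s ∧ p.filter f = a ∧ s.filter f = b := by
  intro w
  induction w with
  | nil => intro a b h; simp at h
  | cons y t ih =>
    intro a b h
    by_cases hy : f y = true
    · rw [List.filter_cons_of_pos hy] at h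
      cases a with
      | nil =>
        simp only [List.nil_append, List.cons.injEq] at h
        exact ⟨[], t, by simp [h.1], rfl, h.2⟩
      | cons a0 a' =>
        simp only [List.cons_append, List.cons.injEq] at h
        obtain ⟨p, s, h1, h2, h3⟩ := ih h.2
        exact ⟨y :: p, s, by simp [h1], by
          rw [List.filter_cons_of_pos hy, h2, h.1], h3⟩
    · rw [List.filter_cons_of_neg (by simpa using hy)] at h
      obtain ⟨p, s, h1, h2, h3⟩ := ih h
      exact ⟨y :: p, s, by simp [h1], by
        rw [List.filter_cons_of_neg (by simpa using hy), h2], h3⟩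

lemma first_split {x : Step} : ∀ {l : List Step}, x ∈ l →
    ∃ m r, l = m ++ x :: r ∧ x ∉ m := by
  intro l
  induction l with
  | nil => simp
  | cons y t ih =>
    intro h
    by_cases hy : y = x
    · exact ⟨[], t, by rw [hy]; rfl, by simp⟩
    · have hxt : x ∈ t := by
        rcases List.mem_cons.mp h with h' | h'
        · exact absurd h'.symm hy
        · exact h'
      obtain ⟨m, r, h1, h2⟩ := ih hxt
      refine ⟨y :: m, r, by rw [h1]; rfl, ?_⟩
      simp only [List.mem_cons, not_or]
      exact ⟨fun h' => hy h'.symm, h2⟩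

lemma hu_struct : ∀ (N : ℕ) (v : List Step), v.length ≤ N →
    (∀ x ∈ v, x ≠ Step.D) → v.count Step.H = v.count Step.U →
    (v ≠ [] → v.head? = some Step.H) → OneUBetweenH v →
    v = (List.replicate (v.count Step.H) [Step.H, Step.U]).flatten := by
  intro N
  induction N with
  | zero =>
    intro v hlen _ _ _ _
    have : v = [] := List.eq_nil_of_length_eq_zero (Nat.le_zero.mp hlen)
    subst this; simp
  | succ N ih =>
    intro v hlen hmem hcnt hhead hone
    cases v with
    | nil => simp
    | cons x t =>
      have hx : x = Step.H := by
        have := hhead (by simp)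
        simpa using this
      subst hx
      cases t with
      | nil => simp [List.count_cons] at hcnt
      | cons y t' =>
        have hy : y = Step.U := by
          cases y with
          | U => rfl
          | D => exact absurd rfl (hmem Step.D (by simp))
          | H =>
            have := hone [] [] t' (by simp) (by simp)
            simp at this
        subst hy
        have hmem' : ∀ x ∈ t', x ≠ Step.D := fun x hx => hmem x (by simp [hx])
        have hcnt' : t'.count Step.H = t'.count Step.U := by
          simp [List.count_cons] at hcnt; omega
        have hone' : OneUBetweenH t' := by
          intro p mid s heq hm
          exact hone (Step.H :: Step.U :: p) mid s (by simp [heq]) hm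
        have hhead' : t' ≠ [] → t'.head? = some Step.H := by
          intro hne
          cases t' with
          | nil => exact absurd rfl hne
          | cons z t'' =>
            cases z with
            | H => rfl
            | D => exact absurd rfl (hmem' Step.D (by simp))
            | U =>
              exfalso
              have hc : t''.count Step.H = t''.count Step.U + 1 := by
                simp [List.count_cons] at hcnt; omega
              have hHmem : Step.H ∈ t'' := by
                have : 0 < t''.count Step.H := by omega
                exact List.count_pos_iff.mp this
              obtain ⟨m, r, h1, h2⟩ := first_split hHmem
              have := hone [] (Step.U :: Step.U :: m) r (by simp [h1])
                (by simp [h2])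
              simp [List.count_cons] at this
        have hlen' : t'.length ≤ N := by simp at hlen; omega
        have hih := ih t' hlen' hmem' hcnt' hhead' hone'
        have hc : (Step.H :: Step.U :: t').count Step.H = t'.count Step.H + 1 := by
          simp [List.count_cons]
        rw [hc, List.replicate_succ, List.flatten_cons]
        simp only [List.cons_append, List.nil_append]
        rw [← hih]

lemma oneU_of_filter {w : List Step}
    (h : OneUBetweenH (w.filter (fun s => s != Step.D))) : OneUBetweenH w := by
  intro p mid s heq hm
  have hfil : w.filter (fun s => s != Step.D) =
      p.filter (fun s => s != Step.D) ++ Step.H ::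
        mid.filter (fun s => s != Step.D) ++ Step.H ::
          s.filter (fun s => s != Step.D) := by
    subst heq; simp [List.filter_append]
  have h1 : (mid.filter (fun s => s != Step.D)).count Step.U = 1 := by
    refine h _ _ _ hfil ?_
    intro hx
    exact hm (List.mem_filter.mp hx).1
  calc mid.count Step.U = (mid.filter (fun s => s != Step.D)).count Step.U :=
        (List.count_filter (by decide)).symm
    _ = 1 := h1

lemma oneU_filter_of {w : List Step} (h : OneUBetweenH w) :
    OneUBetweenH (w.filter (fun s => s != Step.D)) := by
  intro p mid s heq hm
  have heq' : w.filter (fun s => s != Step.D) = p ++ Step.H :: (mid ++ Step.H :: s) := by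
    rw [heq]; simp
  obtain ⟨p', s₁, hw1, hp', hs₁⟩ :=
    filter_split (a := p) (b := mid ++ Step.H :: s) (by decide) heq'
  obtain ⟨mid', s', hw2, hmid', hs'⟩ :=
    filter_split (a := mid) (b := s) (by decide) hs₁
  have hm' : Step.H ∉ mid' := by
    intro hmem
    exact hm (by rw [← hmid']; exact List.mem_filter.mpr ⟨hmem, by decide⟩)
  have h1 := h p' mid' s' (by rw [hw1, hw2]; simp) hm'
  calc mid.count Step.U = mid'.count Step.U := by
        rw [← hmid']; exact List.count_filter (by decide)
    _ = 1 := h1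

lemma oneU_hu : ∀ n : ℕ, OneUBetweenH ((List.replicate n [Step.H, Step.U]).flatten) := by
  intro n
  induction n with
  | zero =>
    intro p mid s h _
    simp at h
  | succ n ih =>
    intro p mid s h hm
    rw [List.replicate_succ, List.flatten_cons] at h
    simp only [List.cons_append, List.nil_append] at h
    cases p with
    | nil =>
      simp only [List.nil_append, List.cons.injEq, true_and] at h
      cases mid with
      | nil => simp at h
      | cons m0 mid' =>
        simp only [List.cons_append, List.cons.injEq, true_and] at h
        cases n with
        | zero => simp at h
        | succ n =>
          rw [List.replicate_succ, List.flatten_cons] at h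
          simp only [List.cons_append, List.nil_append] at h
          cases mid' with
          | nil =>
            obtain ⟨rfl, -⟩ := h
            simp [List.count_cons]
          | cons m1 mid'' =>
            simp only [List.cons_append, List.cons.injEq, true_and] at h
            exact absurd (by simp [h.2.1]) hm
    | cons x p' =>
      simp only [List.cons_append, List.cons.injEq, true_and] at h
      obtain ⟨-, h⟩ := h
      cases p' with
      | nil => simp at h
      | cons y p'' =>
        simp only [List.cons_append, List.cons.injEq, true_and] at h
        exact ih p'' mid s h.2 hm

lemma prefix_hu : ∀ (n : ℕ) (q : List Step),
    q <+: (List.replicate n [Step.H, Step.U]).flatten →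
    q.count Step.U ≤ q.count Step.H := by
  intro n
  induction n with
  | zero =>
    intro q hq
    simp at hq
    simp [hq]
  | succ n ih =>
    intro q hq
    rw [List.replicate_succ, List.flatten_cons] at hq
    simp only [List.cons_append, List.nil_append] at hq
    rcases List.prefix_cons_iff.mp hq with h | ⟨q₁, rfl, hq₁⟩
    · simp [h]
    · rcases List.prefix_cons_iff.mp hq₁ with h | ⟨q₂, rfl, hq₂⟩
      · simp [h, List.count_cons]
      · have := ih q₂ hq₂
        simp [List.count_cons]; omega

lemma dcond_prefix {w : List Step} (hdc : DCond w) :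
    ∀ p : List Step, p <+: w → p.count Step.D ≤ p.count Step.U := by
  intro p
  induction p using List.reverseRecOn with
  | nil => intro _; simp
  | append_singleton p' x ihp =>
    intro hp
    obtain ⟨rest, hrest⟩ := hp
    have hp' : p' <+: w := (List.prefix_append p' [x]).trans ⟨rest, hrest⟩
    cases x with
    | D =>
      have := (hdc p' rest (by rw [← hrest]; simp)).2
      simp [List.count_append, List.count_cons]; omega
    | H =>
      have := ihp hp'
      simp [List.count_append, List.count_cons]; omega
    | U =>
      have := ihp hp'
      simp [List.count_append, List.count_cons]; omega

theorem smotzkin_iff_HU_pattern (n : ℕ) (w : List Step)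
    (hH : w.count Step.H = n) (hU : w.count Step.U = n) (hD : w.count Step.D = n) :
    (((w ≠ [] → w.head? = some Step.H) ∧ OneUBetweenH w ∧ DCond w) ↔
      (w.filter (fun s => s != Step.D) = (List.replicate n [Step.H, Step.U]).flatten ∧
        ∀ p : List Step, p <+: w → p.count Step.D ≤ p.count Step.U)) := by
  constructor
  · rintro ⟨hhead, hone, hdc⟩
    constructor
    · -- filter condition
      have hcntH : (w.filter (fun s => s != Step.D)).count Step.H = n := by
        rw [List.count_filter (by decide)]; exact hH
      have hcntU : (w.filter (fun s => s != Step.D)).count Step.U = n := by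
        rw [List.count_filter (by decide)]; exact hU
      have hmem : ∀ x ∈ w.filter (fun s => s != Step.D), x ≠ Step.D := by
        intro x hx
        have := (List.mem_filter.mp hx).2
        simpa using this
      have hheadf : w.filter (fun s => s != Step.D) ≠ [] →
          (w.filter (fun s => s != Step.D)).head? = some Step.H := by
        intro hne
        cases w with
        | nil => exact absurd rfl hne
        | cons x t =>
          have hx : x = Step.H := by
            have := hhead (by simp)
            simpa using this
          subst hx
          rw [List.filter_cons_of_pos (by decide)]
          rfl
      have := hu_struct (w.filter (fun s => s != Step.D)).length _ le_rfl hmem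
        (by rw [hcntH, hcntU]) hheadf (oneU_filter_of hone)
      rw [hcntH] at this
      exact this
    · exact dcond_prefix hdc
  · rintro ⟨hfil, hpre⟩
    refine ⟨?_, oneU_of_filter (by rw [hfil]; exact oneU_hu n), ?_⟩
    · -- head condition
      intro hne
      cases w with
      | nil => exact absurd rfl hne
      | cons x t =>
        have hxD : x ≠ Step.D := by
          intro h; subst h
          have := hpre [Step.D] ⟨t, rfl⟩
          simp [List.count_cons] at this
        rw [List.filter_cons_of_pos (by simpa using hxD)] at hfil
        cases n with
        | zero => simp at hfil
        | succ n =>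
          rw [List.replicate_succ, List.flatten_cons] at hfil
          simp only [List.cons_append, List.nil_append, List.cons.injEq] at hfil
          simp [hfil.1]
    · -- DCond
      intro p s heq
      have hpU : p.count Step.D + 1 ≤ p.count Step.U := by
        have hpre1 : p ++ [Step.D] <+: w := ⟨s, by rw [heq]; simp⟩
        have := hpre _ hpre1
        simp [List.count_append, List.count_cons] at this
        omega
      have hpH : p.count Step.U ≤ p.count Step.H := by
        have hpf : p.filter (fun s => s != Step.D) <+:
            (List.replicate n [Step.H, Step.U]).flatten := by
          rw [← hfil]
          exact List.IsPrefix.filter _ ⟨Step.D :: s, by rw [heq]⟩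
        have := prefix_hu n _ hpf
        rwa [List.count_filter (by decide), List.count_filter (by decide)] at this
      exact ⟨le_trans hpU hpH, hpU⟩
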